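/- For every d ≥ 3, the subgroup G = ⟨b_1, ..., b_{d-1}⟩ of the Hanoi Towers group is fractal but not strongly fractal; in fact ψ_{x_k}(st_G(L_1)) is a proper subgroup of G for every k = 1, ..., d. -/

import Mathlib

open Equiv

namespace TreeFract

variable {X : Type*}

/-- The automorphism group of the rooted `d`-adic tree with vertex set the free
monoid `List X`: permutations of the vertex set fixing the root and sending
children of a vertex to children of its image (this is exactly incidence
preservation for the rooted tree). -/
def AutT (X : Type*) : Subgroup (Equiv.Perm (List X)) where
  carrier := {g | g [] = [] ∧ ∀ (u : List X) (x : X), ∃ y : X, g (u ++ [x]) = g u ++ [y]}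
  one_mem' := ⟨rfl, fun _ x => ⟨x, rfl⟩⟩
  mul_mem' := by
    rintro f g ⟨hf1, hf2⟩ ⟨hg1, hg2⟩
    refine ⟨?_, fun u x => ?_⟩
    · show f (g []) = []
      rw [hg1, hf1]
    · obtain ⟨y, hy⟩ := hg2 u x
      obtain ⟨z, hz⟩ := hf2 (g u) y
      exact ⟨z, by show f (g (u ++ [x])) = f (g u) ++ [z]; rw [hy, hz]⟩
  inv_mem' := by
    rintro g ⟨hg1, hg2⟩
    have hinj := g.injective
    refine ⟨?_, fun u x => ?_⟩
    · apply hinj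
      show g (g⁻¹ []) = g []
      rw [(Equiv.Perm.eq_inv_iff_eq (f := g)).mp rfl, hg1]
    · have hne : g⁻¹ (u ++ [x]) ≠ [] := by
        intro h
        have h2 : u ++ [x] = g [] := by
          conv_lhs => rw [← (Equiv.Perm.eq_inv_iff_eq (f := g) (y := u ++ [x])).mp rfl, h]
        rw [hg1] at h2
        simp at h2
      obtain ⟨y, hy⟩ : ∃ y, g⁻¹ (u ++ [x]) = (g⁻¹ (u ++ [x])).dropLast ++ [y] :=
        ⟨(g⁻¹ (u ++ [x])).getLast hne, (List.dropLast_append_getLast hne).symm⟩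
      obtain ⟨z, hz⟩ := hg2 ((g⁻¹ (u ++ [x])).dropLast) y
      have happ : g ((g⁻¹ (u ++ [x])).dropLast) ++ [z] = u ++ [x] := by
        rw [← hz, ← hy, (Equiv.Perm.eq_inv_iff_eq (f := g)).mp rfl]
      have h2 : g ((g⁻¹ (u ++ [x])).dropLast) = u ∧ ([z] : List X) = [x] :=
        List.append_inj' happ rfl
      refine ⟨y, ?_⟩
      rw [hy]
      congr 1
      apply hinj
      rw [(Equiv.Perm.eq_inv_iff_eq (f := g)).mp rfl, h2.1]

/-- The underlying function of the section of `g` at the vertex `u`. -/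
def sectFun (g : Equiv.Perm (List X)) (u : List X) : List X → List X :=
  fun v => (g (u ++ v)).drop (g u).length

open scoped Classical in
/-- The section `g_u` of a tree automorphism `g` at a vertex `u`, i.e. the unique
automorphism with `g (u ++ v) = g u ++ g_u v` for all `v`.  (By convention it is
the identity for permutations which are not tree automorphisms.) -/
noncomputable def sect (g : Equiv.Perm (List X)) (u : List X) : Equiv.Perm (List X) :=
  if h : Function.Bijective (sectFun g u) then Equiv.ofBijective _ h else 1

/-- The underlying function of the label of `g` at the vertex `u`. -/
def labelFun (g : Equiv.Perm (List X)) (u : List X) : X → X :=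
  fun x => (g (u ++ [x])).getLastD x

open scoped Classical in
/-- The label `g_(u)` of a tree automorphism `g` at a vertex `u`: the permutation
of `X` with `g (u ++ [x]) = g u ++ [g_(u) x]`.  (By convention it is the identity
for permutations which are not tree automorphisms.) -/
noncomputable def label (g : Equiv.Perm (List X)) (u : List X) : Equiv.Perm X :=
  if h : Function.Bijective (labelFun g u) then Equiv.ofBijective _ h else 1

/-- The stabilizer `st_G(u)` of the vertex `u` in `G`. -/
def stV (G : Subgroup (Equiv.Perm (List X))) (u : List X) : Subgroup (Equiv.Perm (List X)) where
  carrier := {g | g ∈ G ∧ g u = u}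
  one_mem' := ⟨one_mem G, rfl⟩
  mul_mem' := by
    rintro f g ⟨hf, hf2⟩ ⟨hg, hg2⟩
    exact ⟨mul_mem hf hg, by show f (g u) = u; rw [hg2, hf2]⟩
  inv_mem' := by
    rintro g ⟨hg, hg2⟩
    refine ⟨inv_mem hg, ?_⟩
    apply g.injective
    show g (g⁻¹ u) = g u
    rw [(Equiv.Perm.eq_inv_iff_eq (f := g)).mp rfl, hg2]

/-- The stabilizer `st_G(L_n)` of the `n`-th level in `G`. -/
def stL (G : Subgroup (Equiv.Perm (List X))) (n : ℕ) : Subgroup (Equiv.Perm (List X)) where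
  carrier := {g | g ∈ G ∧ ∀ u : List X, u.length = n → g u = u}
  one_mem' := ⟨one_mem G, fun _ _ => rfl⟩
  mul_mem' := by
    rintro f g ⟨hf, hf2⟩ ⟨hg, hg2⟩
    exact ⟨mul_mem hf hg, fun u hu => by show f (g u) = u; rw [hg2 u hu, hf2 u hu]⟩
  inv_mem' := by
    rintro g ⟨hg, hg2⟩
    refine ⟨inv_mem hg, fun u hu => ?_⟩
    apply g.injective
    show g (g⁻¹ u) = g u
    rw [(Equiv.Perm.eq_inv_iff_eq (f := g)).mp rfl, hg2 u hu]

/-- `G` is self-similar: sections of elements of `G` lie in `G`. -/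
def SelfSimilar (G : Subgroup (Equiv.Perm (List X))) : Prop :=
  ∀ g ∈ G, ∀ u : List X, sect g u ∈ G

/-- `G` acts transitively on the first level of the tree. -/
def FirstLevelTransitive (G : Subgroup (Equiv.Perm (List X))) : Prop :=
  ∀ x y : X, ∃ g ∈ G, g [x] = [y]

/-- `G` is level transitive: it acts transitively on every level of the tree. -/
def LevelTransitive (G : Subgroup (Equiv.Perm (List X))) : Prop :=
  ∀ (n : ℕ) (u v : List X), u.length = n → v.length = n → ∃ g ∈ G, g u = v

/-- `G` is fractal: `ψ_u(st_G(u)) = G` for every vertex `u`. -/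
def Fractal (G : Subgroup (Equiv.Perm (List X))) : Prop :=
  ∀ u : List X,
    (fun g => sect g u) '' (stV G u : Set (Equiv.Perm (List X))) = (G : Set (Equiv.Perm (List X)))

/-- `G` is strongly fractal: `ψ_x(st_G(L_1)) = G` for every first-level vertex `x`. -/
def StronglyFractal (G : Subgroup (Equiv.Perm (List X))) : Prop :=
  ∀ x : X,
    (fun g => sect g [x]) '' (stL G 1 : Set (Equiv.Perm (List X))) = (G : Set (Equiv.Perm (List X)))

/-- `G` is super strongly fractal: `ψ_u(st_G(L_n)) = G` for every `n` and every `u ∈ L_n`. -/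
def SuperStronglyFractal (G : Subgroup (Equiv.Perm (List X))) : Prop :=
  ∀ (n : ℕ) (u : List X), u.length = n →
    (fun g => sect g u) '' (stL G n : Set (Equiv.Perm (List X))) = (G : Set (Equiv.Perm (List X)))

/-- The normal closure `⟨S⟩^G` of a subset `S ⊆ G` in the subgroup `G`, realized as a
subgroup of the ambient group: the subgroup generated by all `G`-conjugates of `S`. -/
def normalClosureIn (G : Subgroup (Equiv.Perm (List X))) (S : Set (Equiv.Perm (List X))) :
    Subgroup (Equiv.Perm (List X)) :=
  Subgroup.closure {t | ∃ g ∈ G, ∃ s ∈ S, t = g * s * g⁻¹}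

end TreeFract
namespace TreeFract

/-! ### The Hanoi towers generators -/

section Hanoi

variable {d : ℕ}

/-- The underlying function of the automorphism `a_{ij}` of the Hanoi Towers group:
it swaps the first occurrence of `i` or `j` in a word. -/
def hanoiFun (i j : Fin d) : List (Fin d) → List (Fin d)
  | [] => []
  | x :: w => if x = i then j :: w else if x = j then i :: w else x :: hanoiFun i j w

lemma hanoiFun_invol (i j : Fin d) : ∀ w, hanoiFun i j (hanoiFun i j w) = w
  | [] => rfl
  | x :: w => by
    by_cases h1 : x = i
    · subst h1
      by_cases h2 : j = x
      · simp [hanoiFun, h2]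
      · simp [hanoiFun, h2]
    · by_cases h2 : x = j
      · subst h2
        simp [hanoiFun, h1]
      · simp [hanoiFun, h1, h2, hanoiFun_invol i j w]

/-- The automorphism `a_{ij}` of the `d`-adic tree: its label at the root is the
transposition `(x_i x_j)`, its sections at the first-level vertices `x_i` and `x_j`
are trivial and all its other first-level sections equal `a_{ij}` again. -/
def hanoiA (i j : Fin d) : Equiv.Perm (List (Fin d)) :=
  ⟨hanoiFun i j, hanoiFun i j, hanoiFun_invol i j, hanoiFun_invol i j⟩

end Hanoi

/-- The generator `b_i = a_{i,i+1}` (here `i` runs through `0, …, d-2`,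
corresponding to the paper's `b_1, …, b_{d-1}`). -/
def hanoiB (d : ℕ) (i : ℕ) (h : i + 1 < d) : Equiv.Perm (List (Fin d)) :=
  hanoiA ⟨i, Nat.lt_of_succ_lt h⟩ ⟨i + 1, h⟩

/-- The subgroup `G = ⟨b_1, …, b_{d-1}⟩` of the Hanoi Towers group. -/
def hanoiGroup (d : ℕ) : Subgroup (Equiv.Perm (List (Fin d))) :=
  Subgroup.closure {g | ∃ (i : ℕ) (h : i + 1 < d), g = hanoiB d i h}

/-! ### GGS groups (and the rooted automorphism `a`) -/

section GGS

variable {p : ℕ}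

/-- The function adding `m` to the first letter of a word over `ZMod p`. -/
def rotFun (m : ZMod p) : List (ZMod p) → List (ZMod p)
  | [] => []
  | x :: w => (x + m) :: w

/-- The rooted automorphism of the `p`-adic tree whose label at the root is the
`p`-cycle `x ↦ x + m`; for `m = 1` this is the generator `a` of a GGS-group
(identifying `x_i` with `i mod p`). -/
def rotPerm (m : ZMod p) : Equiv.Perm (List (ZMod p)) :=
  ⟨rotFun m, rotFun (-m),
    by intro w; cases w <;> simp [rotFun],
    by intro w; cases w <;> simp [rotFun]⟩

/-- The underlying function of the GGS generator `b` with defining vector `e`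
(the value `e 0` is irrelevant; `e i` for `i ≠ 0` are the coordinates
`e_1, …, e_{p-1}`): `b` fixes the first level, its section at `x_i` is
`a^{e_i}` for `i = 1, …, p-1` and its section at `x_p` (identified with `0`)
is `b` again. -/
def ggsFun (e : ZMod p → ZMod p) : List (ZMod p) → List (ZMod p)
  | [] => []
  | x :: w => if x = 0 then x :: ggsFun e w else x :: rotFun (e x) w

lemma ggsFun_inv (e : ZMod p → ZMod p) : ∀ w, ggsFun (fun i => -(e i)) (ggsFun e w) = w
  | [] => rfl
  | x :: w => by
    by_cases h : x = 0
    · simp only [ggsFun, if_pos h]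
      rw [ggsFun_inv e w]
    · simp only [ggsFun, if_neg h]
      cases w <;> simp [rotFun]

/-- The GGS generator `b` with defining vector `e`, as a tree automorphism. -/
def ggsB (e : ZMod p → ZMod p) : Equiv.Perm (List (ZMod p)) :=
  ⟨ggsFun e, ggsFun (fun i => -(e i)), ggsFun_inv e, by
    intro w
    have h := ggsFun_inv (fun i => -(e i)) w
    simpa using h⟩

end GGS

/-- The GGS-group `G = ⟨a, b⟩` over the `p`-adic tree with defining vector `e`. -/
def ggsGroup (p : ℕ) (e : ZMod p → ZMod p) : Subgroup (Equiv.Perm (List (ZMod p))) :=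
  Subgroup.closure {rotPerm 1, ggsB e}

/-! ### The first Grigorchuk group -/

/-- The three directed generators `b, c, d` (for `k % 3 = 0, 1, 2` respectively) of the
first Grigorchuk group, defined by the mutual recursion
`b = (a, c)`, `c = (a, d)`, `d = (1, b)` (identifying `x_1` with `0` and `x_2` with `1`). -/
def griFun : ℕ → List (ZMod 2) → List (ZMod 2)
  | _, [] => []
  | k, x :: w => if x = 0 then (if k % 3 = 2 then x :: w else x :: rotFun 1 w)
                 else x :: griFun (k + 1) w

lemma griFun_invol : ∀ (w : List (ZMod 2)) (k : ℕ), griFun k (griFun k w) = w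
  | [], _ => rfl
  | x :: w, k => by
    by_cases h : x = 0
    · by_cases h3 : k % 3 = 2
      · simp [griFun, h, h3]
      · simp only [griFun, if_pos h, if_neg h3]
        cases w with
        | nil => rfl
        | cons y v =>
            have hy : y + 1 + 1 = y := by
              rw [add_assoc]
              simp [show (1 : ZMod 2) + 1 = 0 from rfl]
            simp [rotFun, hy]
    · simp only [griFun, if_neg h]
      rw [griFun_invol w (k + 1)]

/-- The generator `b` of the first Grigorchuk group, with sections `(a, c)`. -/
def griB : Equiv.Perm (List (ZMod 2)) :=
  ⟨griFun 0, griFun 0, fun w => griFun_invol w 0, fun w => griFun_invol w 0⟩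

/-- The generator `c` of the first Grigorchuk group, with sections `(a, d)`. -/
def griC : Equiv.Perm (List (ZMod 2)) :=
  ⟨griFun 1, griFun 1, fun w => griFun_invol w 1, fun w => griFun_invol w 1⟩

/-- The generator `d` of the first Grigorchuk group, with sections `(1, b)`. -/
def griD : Equiv.Perm (List (ZMod 2)) :=
  ⟨griFun 2, griFun 2, fun w => griFun_invol w 2, fun w => griFun_invol w 2⟩

/-- The first Grigorchuk group `𝒢 = ⟨a, b, c, d⟩` acting on the binary tree. -/
def grigorchukGroup : Subgroup (Equiv.Perm (List (ZMod 2))) :=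
  Subgroup.closure {rotPerm 1, griB, griC, griD}

end TreeFract

/-!
Fractality: `G` is self-similar, and each generator `b_i` is the section at a first-level vertex
`x_k` of an element fixing `x_k`, namely of the conjugate of `b_i` by some `h ∈ G` that moves
`x_k` to a letter `x_m` fixed by `b_i` (one exists because `d ≥ 3`) and has trivial section at
`x_k`. Such `h` exist because `b_j` swaps `x_j` and `x_{j+1}` with trivial sections there.
Sections at a fixed vertex are multiplicative, so this extends from the generators to `G` and,
by induction on the length, from the first level to every vertex.

Failure of strong fractality: writing `s(g)` for the sign of the root label of `g`, every
`g ∈ G` satisfies `s(g_x) (-1)^x = s(g) (-1)^{g(x)}`, because each `b_i` does (it swaps letters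
of different parity) and the identity is multiplicative. Hence the sections of an element of
`st_G(L_1)` all have even root label, while the root label of `b_1` is odd.
-/

namespace TreeFract

section AutT

variable {X : Type*} {f g : Equiv.Perm (List X)}

lemma apply_nil (hg : g ∈ AutT X) : g [] = [] := hg.1

lemma exists_apply_append (hg : g ∈ AutT X) (u v : List X) :
    ∃ w : List X, g (u ++ v) = g u ++ w := by
  induction v using List.reverseRecOn with
  | nil => exact ⟨[], by simp⟩
  | append_singleton v x ih =>
    obtain ⟨w, hw⟩ := ih
    obtain ⟨y, hy⟩ := hg.2 (u ++ v) x
    refine ⟨w ++ [y], ?_⟩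
    rw [← List.append_assoc, hy, hw, List.append_assoc]

lemma apply_append_sectFun (hg : g ∈ AutT X) (u v : List X) :
    g (u ++ v) = g u ++ sectFun g u v := by
  obtain ⟨w, hw⟩ := exists_apply_append hg u v
  rw [sectFun, hw, List.drop_left]

lemma sectFun_bijective (hg : g ∈ AutT X) (u : List X) : Function.Bijective (sectFun g u) := by
  have hg' : g⁻¹ ∈ AutT X := inv_mem hg
  refine Function.bijective_iff_has_inverse.2 ⟨sectFun g⁻¹ (g u), fun v => ?_, fun v => ?_⟩
  · have h := apply_append_sectFun hg' (g u) (sectFun g u v)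
    rw [← apply_append_sectFun hg] at h
    simpa [eq_comm] using h
  · have h := apply_append_sectFun hg u (sectFun g⁻¹ (g u) v)
    have h' := apply_append_sectFun hg' (g u) v
    simp only [Equiv.Perm.coe_inv, Equiv.symm_apply_apply] at h'
    rw [← h'] at h
    simpa [eq_comm] using h

lemma apply_append (hg : g ∈ AutT X) (u v : List X) : g (u ++ v) = g u ++ sect g u v := by
  rw [sect, dif_pos (sectFun_bijective hg u)]
  exact apply_append_sectFun hg u v

lemma sect_eq_iff (hg : g ∈ AutT X) (u : List X) (h : Equiv.Perm (List X)) :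
    sect g u = h ↔ ∀ v, g (u ++ v) = g u ++ h v := by
  refine ⟨fun hh v => hh ▸ apply_append hg u v, fun hh => Equiv.ext fun v => ?_⟩
  have := (apply_append hg u v).symm.trans (hh v)
  exact List.append_cancel_left this

lemma sect_nil (hg : g ∈ AutT X) : sect g [] = g :=
  (sect_eq_iff hg [] g).2 fun v => by simp [apply_nil hg]

lemma sect_one (u : List X) : sect (1 : Equiv.Perm (List X)) u = 1 :=
  (sect_eq_iff (one_mem _) u 1).2 fun _ => rfl

lemma sect_mem (hg : g ∈ AutT X) (u : List X) : sect g u ∈ AutT X := by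
  refine ⟨?_, fun v x => ?_⟩
  · simpa using (apply_append hg u []).symm
  · obtain ⟨y, hy⟩ := hg.2 (u ++ v) x
    refine ⟨y, List.append_cancel_left (as := g u) ?_⟩
    rw [← apply_append hg, ← List.append_assoc, hy, apply_append hg, List.append_assoc]

lemma sect_mul (hf : f ∈ AutT X) (hg : g ∈ AutT X) (u : List X) :
    sect (f * g) u = sect f (g u) * sect g u :=
  (sect_eq_iff (mul_mem hf hg) u _).2 fun v => by
    simp only [Equiv.Perm.mul_apply, apply_append hg, apply_append hf]

lemma sect_inv (hg : g ∈ AutT X) (u : List X) : sect g⁻¹ u = (sect g (g⁻¹ u))⁻¹ := by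
  have h := sect_mul hg (inv_mem hg) u
  rw [mul_inv_cancel, sect_one] at h
  exact eq_inv_of_mul_eq_one_right h.symm

lemma sect_append (hg : g ∈ AutT X) (u v : List X) : sect g (u ++ v) = sect (sect g u) v :=
  (sect_eq_iff hg _ _).2 fun w => by
    rw [List.append_assoc, apply_append hg, apply_append (sect_mem hg u), apply_append hg,
      List.append_assoc]

lemma apply_singleton_labelFun (hg : g ∈ AutT X) (x : X) : g [x] = [labelFun g [] x] := by
  obtain ⟨y, hy⟩ := hg.2 [] x
  simp only [List.nil_append, apply_nil hg] at hy
  simp [labelFun, hy]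

lemma apply_singleton (hg : g ∈ AutT X) (x : X) : g [x] = [label g [] x] := by
  have hbij : Function.Bijective (labelFun g []) := by
    refine ⟨fun x y hxy => ?_, fun y => ?_⟩
    · have h : g [x] = g [y] := by
        rw [apply_singleton_labelFun hg, apply_singleton_labelFun hg, hxy]
      simpa using g.injective h
    · refine ⟨labelFun g⁻¹ [] y, ?_⟩
      have h := congrArg g (apply_singleton_labelFun (inv_mem hg) y)
      rw [apply_singleton_labelFun hg] at h
      simpa using h.symm
  rw [label, dif_pos hbij]
  exact apply_singleton_labelFun hg x

lemma label_nil_one : label (1 : Equiv.Perm (List X)) [] = 1 :=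
  Equiv.ext fun x => by simpa using (apply_singleton (one_mem (AutT X)) x).symm

lemma label_nil_mul (hf : f ∈ AutT X) (hg : g ∈ AutT X) :
    label (f * g) [] = label f [] * label g [] :=
  Equiv.ext fun x => by
    have h := apply_singleton (mul_mem hf hg) x
    rw [Equiv.Perm.mul_apply, apply_singleton hg, apply_singleton hf] at h
    simpa using h.symm

lemma conj_apply_and_sect_conj {h b : Equiv.Perm (List X)} (hh : h ∈ AutT X) (hb : b ∈ AutT X)
    {u v : List X} (huv : h u = v) (hsect : sect h u = 1) (hbv : b v = v) :
    (h⁻¹ * b * h) u = u ∧ sect (h⁻¹ * b * h) u = sect b v := by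
  have hvu : h⁻¹ v = u := by rw [← huv]; exact h.symm_apply_apply u
  refine ⟨by simp only [Equiv.Perm.mul_apply, huv, hbv, hvu], ?_⟩
  rw [sect_mul (mul_mem (inv_mem hh) hb) hh, sect_mul (inv_mem hh) hb, sect_inv hh, huv, hbv,
    hvu, hsect, inv_one, one_mul, mul_one]

end AutT

section Subgroup

variable {X : Type*} {G : Subgroup (Equiv.Perm (List X))}

lemma selfSimilar_closure {S : Set (Equiv.Perm (List X))} (hS : Subgroup.closure S ≤ AutT X)
    (h : ∀ s ∈ S, ∀ u, sect s u ∈ Subgroup.closure S) : SelfSimilar (Subgroup.closure S) := by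
  intro g hg
  induction hg using Subgroup.closure_induction with
  | mem s hs => exact h s hs
  | one => simp [sect_one]
  | mul f g hf hg ihf ihg =>
    exact fun u => sect_mul (hS hf) (hS hg) u ▸ mul_mem (ihf _) (ihg _)
  | inv g hg ihg => exact fun u => sect_inv (hS hg) u ▸ inv_mem (ihg _)

lemma closure_subset_image_sect (hG : G ≤ AutT X) {S : Set (Equiv.Perm (List X))}
    {u : List X} (hS : S ⊆ (fun g => sect g u) '' (stV G u : Set (Equiv.Perm (List X)))) :
    (Subgroup.closure S : Set (Equiv.Perm (List X))) ⊆
      (fun g => sect g u) '' (stV G u : Set (Equiv.Perm (List X))) := by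
  intro g hg
  induction hg using Subgroup.closure_induction with
  | mem s hs => exact hS hs
  | one => exact ⟨1, one_mem _, sect_one u⟩
  | mul f g _ _ ihf ihg =>
    obtain ⟨wf, hwf, rfl⟩ := ihf
    obtain ⟨wg, hwg, rfl⟩ := ihg
    refine ⟨wf * wg, mul_mem hwf hwg, ?_⟩
    simp only [sect_mul (hG hwf.1) (hG hwg.1), hwg.2]
  | inv g _ ihg =>
    obtain ⟨w, hw, rfl⟩ := ihg
    refine ⟨w⁻¹, inv_mem hw, ?_⟩
    simp only [sect_inv (hG hw.1), (inv_mem hw).2]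

lemma subset_image_sect_of_forall_singleton (hG : G ≤ AutT X)
    (h : ∀ x : X, (G : Set (Equiv.Perm (List X))) ⊆
      (fun g => sect g [x]) '' (stV G [x] : Set (Equiv.Perm (List X))))
    (u : List X) :
    (G : Set (Equiv.Perm (List X))) ⊆
      (fun g => sect g u) '' (stV G u : Set (Equiv.Perm (List X))) := by
  induction u with
  | nil => exact fun g hg => ⟨g, ⟨hg, apply_nil (hG hg)⟩, sect_nil (hG hg)⟩
  | cons x u ih =>
    intro g hg
    obtain ⟨w₁, ⟨hw₁G, hw₁u⟩, rfl⟩ := ih hg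
    obtain ⟨w, ⟨hwG, hwx⟩, hw : sect w [x] = w₁⟩ := h x hw₁G
    have hwA := hG hwG
    refine ⟨w, ⟨hwG, ?_⟩, ?_⟩
    · show w (x :: u) = x :: u
      rw [← List.singleton_append, apply_append hwA, hwx, hw, hw₁u]
    · show sect w (x :: u) = sect w₁ u
      rw [← List.singleton_append, sect_append hwA, hw]

lemma fractal_of_forall_singleton (hG : G ≤ AutT X) (hss : SelfSimilar G)
    (h : ∀ x : X, (G : Set (Equiv.Perm (List X))) ⊆
      (fun g => sect g [x]) '' (stV G [x] : Set (Equiv.Perm (List X)))) :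
    Fractal G := fun u =>
  subset_antisymm (Set.image_subset_iff.2 fun w hw => hss w hw.1 u)
    (subset_image_sect_of_forall_singleton hG h u)

lemma label_nil_eq_one_of_mem_stL (hG : G ≤ AutT X) {g : Equiv.Perm (List X)}
    (hg : g ∈ stL G 1) : label g [] = 1 :=
  Equiv.ext fun x => by simpa [apply_singleton (hG hg.1)] using hg.2 [x] rfl

end Subgroup

lemma exists_ne_and_ne_of_three_le_card {α : Type*} [Fintype α] [DecidableEq α]
    (h : 3 ≤ Fintype.card α) (a b : α) : ∃ m : α, m ≠ a ∧ m ≠ b := by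
  obtain ⟨m, -, hm⟩ := Finset.exists_mem_notMem_of_card_lt_card (s := {a, b})
    (t := Finset.univ) (Finset.card_le_two.trans_lt (by simpa using Nat.lt_of_succ_le h))
  exact ⟨m, by simpa [not_or] using hm⟩

section Hanoi

variable {d : ℕ}

lemma hanoiA_cons (i j x : Fin d) (w : List (Fin d)) :
    hanoiA i j (x :: w) = swap i j x :: if x = i ∨ x = j then w else hanoiA i j w := by
  change hanoiFun i j (x :: w) = _
  by_cases hi : x = i
  · subst hi; simp [hanoiFun]
  · by_cases hj : x = j
    · subst hj; simp [hanoiFun, hi]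
    · simp [hanoiFun, hi, hj, swap_apply_of_ne_of_ne hi hj]; rfl

lemma hanoiA_singleton (i j x : Fin d) : hanoiA i j [x] = [swap i j x] := by
  rw [hanoiA_cons]; split_ifs <;> rfl

lemma hanoiA_mem_AutT (i j : Fin d) : hanoiA i j ∈ AutT (Fin d) := by
  refine ⟨rfl, fun u x => ?_⟩
  induction u with
  | nil => exact ⟨swap i j x, hanoiA_singleton i j x⟩
  | cons z u ih =>
    obtain ⟨y, hy⟩ := ih
    by_cases hz : z = i ∨ z = j
    · exact ⟨x, by simp only [List.cons_append, hanoiA_cons, if_pos hz]⟩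
    · exact ⟨y, by simp only [List.cons_append, hanoiA_cons, if_neg hz, hy]⟩

lemma sect_hanoiA_singleton (i j x : Fin d) :
    sect (hanoiA i j) [x] = if x = i ∨ x = j then 1 else hanoiA i j :=
  (sect_eq_iff (hanoiA_mem_AutT i j) _ _).2 fun v => by
    rw [List.singleton_append, hanoiA_cons, hanoiA_singleton]
    split_ifs <;> rfl

lemma label_hanoiA (i j : Fin d) : label (hanoiA i j) [] = swap i j :=
  Equiv.ext fun x => by
    simpa [hanoiA_singleton] using (apply_singleton (hanoiA_mem_AutT i j) x).symm

lemma sect_hanoiA_eq_one_or_eq (i j : Fin d) (u : List (Fin d)) :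
    sect (hanoiA i j) u = 1 ∨ sect (hanoiA i j) u = hanoiA i j := by
  induction u with
  | nil => exact Or.inr (sect_nil (hanoiA_mem_AutT i j))
  | cons x u ih =>
    rw [← List.singleton_append, sect_append (hanoiA_mem_AutT i j), sect_hanoiA_singleton]
    split_ifs
    · exact Or.inl (sect_one u)
    · exact ih

lemma sign_label_hanoiB (i : ℕ) (hi : i + 1 < d) :
    Equiv.Perm.sign (label (hanoiB d i hi) []) = -1 :=
  (label_hanoiA _ _).symm ▸ Equiv.Perm.sign_swap (by simp)

lemma hanoiB_mem (i : ℕ) (h : i + 1 < d) : hanoiB d i h ∈ hanoiGroup d :=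
  Subgroup.subset_closure ⟨i, h, rfl⟩

lemma hanoiGroup_le_AutT : hanoiGroup d ≤ AutT (Fin d) :=
  (Subgroup.closure_le _).2 fun _ ⟨_, _, hg⟩ => hg ▸ hanoiA_mem_AutT _ _

lemma selfSimilar_hanoiGroup : SelfSimilar (hanoiGroup d) :=
  selfSimilar_closure hanoiGroup_le_AutT fun _ ⟨i, h, hb⟩ u => by
    subst hb
    rcases sect_hanoiA_eq_one_or_eq _ _ u with h1 | hb
    · exact h1 ▸ one_mem _
    · exact hb ▸ hanoiB_mem i h

lemma exists_hanoiGroup_apply_singleton_sect_eq_one (k m : Fin d) :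
    ∃ h ∈ hanoiGroup d, h [k] = [m] ∧ sect h [k] = 1 := by
  let R : Fin d → Fin d → Prop := fun k m => ∃ h ∈ hanoiGroup d, h [k] = [m] ∧ sect h [k] = 1
  have symm {k m : Fin d} : R k m → R m k := by
    rintro ⟨h, hG, hkm, hsect⟩
    have hmk : h⁻¹ [m] = [k] := by rw [← hkm]; exact h.symm_apply_apply _
    exact ⟨h⁻¹, inv_mem hG, hmk, by rw [sect_inv (hanoiGroup_le_AutT hG), hmk, hsect, inv_one]⟩
  have trans {k l m : Fin d} : R k l → R l m → R k m := by
    rintro ⟨h₁, hG₁, hkl, hsect₁⟩ ⟨h₂, hG₂, hlm, hsect₂⟩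
    refine ⟨h₂ * h₁, mul_mem hG₂ hG₁, by rw [Equiv.Perm.mul_apply, hkl, hlm], ?_⟩
    rw [sect_mul (hanoiGroup_le_AutT hG₂) (hanoiGroup_le_AutT hG₁), hkl, hsect₁, hsect₂, mul_one]
  have from_zero (n : ℕ) (hn : n < d) : R ⟨0, by omega⟩ ⟨n, hn⟩ := by
    induction n with
    | zero => exact ⟨1, one_mem _, rfl, sect_one _⟩
    | succ n ih =>
      refine trans (ih (by omega)) ⟨hanoiB d n hn, hanoiB_mem n hn, ?_, ?_⟩
      · simp [hanoiB, hanoiA_singleton]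
      · simp [hanoiB, sect_hanoiA_singleton]
  exact trans (symm (from_zero k k.2)) (from_zero m m.2)

lemma hanoiGroup_subset_image_sect_singleton (hd : 3 ≤ d) (k : Fin d) :
    (hanoiGroup d : Set (Equiv.Perm (List (Fin d)))) ⊆
      (fun g => sect g [k]) '' (stV (hanoiGroup d) [k] : Set (Equiv.Perm (List (Fin d)))) := by
  refine closure_subset_image_sect hanoiGroup_le_AutT ?_
  rintro _ ⟨i, hi, rfl⟩
  obtain ⟨m, hmi, hmi'⟩ := exists_ne_and_ne_of_three_le_card (α := Fin d) (by simpa using hd)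
    ⟨i, by omega⟩ ⟨i + 1, hi⟩
  obtain ⟨h, hG, hkm, hsect⟩ := exists_hanoiGroup_apply_singleton_sect_eq_one k m
  have hbm : hanoiB d i hi [m] = [m] := by
    simp [hanoiB, hanoiA_singleton, swap_apply_of_ne_of_ne hmi hmi']
  obtain ⟨hfix, hw⟩ := conj_apply_and_sect_conj (hanoiGroup_le_AutT hG)
    (hanoiA_mem_AutT _ _) hkm hsect hbm
  refine ⟨h⁻¹ * hanoiB d i hi * h, ⟨mul_mem (mul_mem (inv_mem hG) (hanoiB_mem i hi)) hG, hfix⟩, ?_⟩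
  simp only [hw, hanoiB, sect_hanoiA_singleton, hmi, hmi', or_self, if_false]

lemma fractal_hanoiGroup (hd : 3 ≤ d) : Fractal (hanoiGroup d) :=
  fractal_of_forall_singleton hanoiGroup_le_AutT selfSimilar_hanoiGroup
    (hanoiGroup_subset_image_sect_singleton hd)

open Equiv.Perm in
lemma sign_label_sect_hanoiB_mul_neg_one_pow (i : ℕ) (hi : i + 1 < d) (x : Fin d) :
    sign (label (sect (hanoiB d i hi) [x]) []) * (-1) ^ (x : ℕ) =
      sign (label (hanoiB d i hi) []) * (-1) ^ (label (hanoiB d i hi) [] x : ℕ) := by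
  rw [sign_label_hanoiB]
  simp only [hanoiB, label_hanoiA, sect_hanoiA_singleton]
  split_ifs with hx
  · rcases hx with rfl | rfl <;> simp [label_nil_one, pow_succ]
  · rw [swap_apply_of_ne_of_ne (not_or.1 hx).1 (not_or.1 hx).2]
    exact congrArg (· * _) (sign_label_hanoiB i hi)

open Equiv.Perm in
lemma sign_label_sect_mul_neg_one_pow_of_mem_hanoiGroup {g : Equiv.Perm (List (Fin d))}
    (hg : g ∈ hanoiGroup d) (x : Fin d) :
    sign (label (sect g [x]) []) * (-1) ^ (x : ℕ) =
      sign (label g []) * (-1) ^ (label g [] x : ℕ) := by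
  induction hg using Subgroup.closure_induction'' generalizing x with
  | mem b hb =>
    obtain ⟨i, hi, rfl⟩ := hb
    exact sign_label_sect_hanoiB_mul_neg_one_pow i hi x
  | inv_mem b hb =>
    obtain ⟨i, hi, rfl⟩ := hb
    exact sign_label_sect_hanoiB_mul_neg_one_pow i hi x
  | one => simp [sect_one, label_nil_one]
  | mul f g hf hg ihf ihg =>
    have hfA := hanoiGroup_le_AutT hf
    have hgA := hanoiGroup_le_AutT hg
    rw [sect_mul hfA hgA, apply_singleton hgA, label_nil_mul (sect_mem hfA _) (sect_mem hgA _),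
      label_nil_mul hfA hgA, map_mul, map_mul, mul_assoc, ihg, mul_left_comm, ihf,
      mul_left_comm, Equiv.Perm.mul_apply, mul_assoc]

lemma sect_singleton_ne_hanoiB_of_mem_stL {g : Equiv.Perm (List (Fin d))}
    (hg : g ∈ stL (hanoiGroup d) 1) (x : Fin d) (i : ℕ) (hi : i + 1 < d) :
    sect g [x] ≠ hanoiB d i hi := by
  intro h
  have key := sign_label_sect_mul_neg_one_pow_of_mem_hanoiGroup hg.1 x
  rw [h, label_nil_eq_one_of_mem_stL hanoiGroup_le_AutT hg, sign_label_hanoiB] at key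
  simp at key

lemma image_sect_stL_one_hanoiGroup_ssubset (hd : 1 < d) (k : Fin d) :
    (fun g => sect g [k]) '' (stL (hanoiGroup d) 1 : Set (Equiv.Perm (List (Fin d))))
      ⊂ (hanoiGroup d : Set (Equiv.Perm (List (Fin d)))) := by
  refine (Set.ssubset_iff_of_subset ?_).2 ⟨hanoiB d 0 hd, hanoiB_mem 0 hd, ?_⟩
  · exact Set.image_subset_iff.2 fun g hg => selfSimilar_hanoiGroup g hg.1 [k]
  · rintro ⟨g, hg, h⟩
    exact sect_singleton_ne_hanoiB_of_mem_stL hg k 0 hd h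

end Hanoi

/-- For every `d ≥ 3`, the subgroup `G = ⟨b_1, …, b_{d-1}⟩` of the
Hanoi Towers group is fractal but not strongly fractal; in fact `ψ_{x_k}(st_G(L_1))` is
a proper subgroup of `G` for every `k`. -/
theorem hanoiGroup_fractal_not_stronglyFractal (d : ℕ) (hd : 3 ≤ d) :
    Fractal (hanoiGroup d) ∧ ¬ StronglyFractal (hanoiGroup d) ∧
      ∀ k : Fin d,
        (fun g => sect g [k]) '' (stL (hanoiGroup d) 1 : Set (Equiv.Perm (List (Fin d))))
          ⊂ (hanoiGroup d : Set (Equiv.Perm (List (Fin d)))) := by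
  have proper := image_sect_stL_one_hanoiGroup_ssubset (d := d) (by omega)
  exact ⟨fractal_hanoiGroup hd, fun hsf => (proper ⟨0, by omega⟩).ne (hsf _), proper⟩

end TreeFract
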